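/- arXiv:1308.5757 — 9 statements merged into one kernel-verified Lean document; each statement's English description precedes it below -/
import Mathlib

section
/- Let n be an odd natural number and let x : ℤ/nℤ → ℝ satisfy (x_{i+1} - x_i)^2 = (x_{j+1} - x_j)^2 for all i, j in ℤ/nℤ. Then x_i = x_j for all i, j. -/
theorem stmt1 (n : ℕ) (hn : Odd n) (x : ZMod n → ℝ)
    (h : ∀ i j : ZMod n, (x (i + 1) - x i) ^ 2 = (x (j + 1) - x j) ^ 2) :
    ∀ i j : ZMod n, x i = x j := by
  have hn0 : n ≠ 0 := by rintro rfl; simpa using hn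
  haveI : NeZero n := ⟨hn0⟩
  set c : ℝ := x (0 + 1) - x 0 with hc
  -- each difference is ± c
  have hd : ∀ i : ZMod n, x (i + 1) - x i = c ∨ x (i + 1) - x i = -c := by
    intro i
    have := h i 0
    rw [← hc] at this
    exact sq_eq_sq_iff_eq_or_eq_neg.mp this
  -- sign function
  set g : ZMod n → ℤ := fun i => if x (i + 1) - x i = c then 1 else -1 with hg
  have hgd : ∀ i : ZMod n, x (i + 1) - x i = (g i : ℝ) * c := by
    intro i
    rcases hd i with h1 | h1
    · simp [hg, h1]
    · by_cases h2 : x (i + 1) - x i = c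
      · simp [hg, h2]
      · rw [hg]; simp only [if_neg h2]; rw [h1]; push_cast; ring
  -- telescoping sum is zero
  have hsum : ∑ i : ZMod n, (x (i + 1) - x i) = 0 := by
    rw [Finset.sum_sub_distrib, sub_eq_zero]
    exact Fintype.sum_equiv (Equiv.addRight (1 : ZMod n)) _ _ (fun i => rfl)
  have hsum2 : ((∑ i : ZMod n, g i : ℤ) : ℝ) * c = 0 := by
    rw [Int.cast_sum, Finset.sum_mul, ← hsum]
    exact Finset.sum_congr rfl fun i _ => (hgd i).symm
  -- the sum of signs is odd, hence nonzero
  have hodd : Odd (∑ i : ZMod n, g i) := by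
    apply Int.odd_iff.mpr
    rw [Finset.sum_int_mod]
    have hone : ∀ i : ZMod n, g i % 2 = 1 := by
      intro i; by_cases h2 : x (i + 1) - x i = c <;> simp [hg, h2]
    simp only [hone, Finset.sum_const, Finset.card_univ, ZMod.card, nsmul_eq_mul, mul_one]
    have : (n : ℤ) % 2 = 1 := Int.odd_iff.mp (by exact_mod_cast hn)
    omega
  have hC : c = 0 := by
    rcases mul_eq_zero.mp hsum2 with h1 | h1
    · exact absurd (by exact_mod_cast h1) (by rintro h2; exact (Int.not_even_iff_odd.mpr hodd) (by simp [h2]))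
    · exact h1
  -- all differences are zero
  have hstep : ∀ i : ZMod n, x (i + 1) = x i := by
    intro i
    have := hgd i
    rw [hC, mul_zero, sub_eq_zero] at this
    exact this
  have key : ∀ k : ℕ, x ((k : ZMod n)) = x 0 := by
    intro k
    induction k with
    | zero => simp
    | succ m ih => rw [Nat.cast_succ, hstep]; exact ih
  intro i j
  have hi := key i.val
  have hj := key j.val
  rw [ZMod.natCast_val, ZMod.cast_id] at hi hj
  rw [hi, hj]
end

section
/- Let x : ℤ → ℝ with x_0 = 0, and let k, n be coprime integers with n ≥ 1. Assume x_{i+k} - x_i = x_i - x_{i-k} for every i ∈ ℤ, and x_{i+n} = 1 + x_i for every i ∈ ℤ. Then x_i = i/n for every i ∈ ℤ. -/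
lemma step_aux (f : ℤ → ℝ) (p : ℤ) (s : ℝ) (h : ∀ j, f (j + p) = f j + s) :
    ∀ (m : ℤ) (j : ℤ), f (j + m * p) = f j + (m : ℝ) * s := by
  have h' : ∀ j, f (j - p) = f j - s := by
    intro j
    have := h (j - p)
    simp at this
    linarith
  intro m
  induction m using Int.induction_on with
  | zero => simp
  | succ m ih =>
      intro j
      have e : j + ((m : ℤ) + 1) * p = (j + (m : ℤ) * p) + p := by ring
      rw [e, h, ih]
      push_cast
      ring
  | pred m ih =>
      intro j
      have e : j + (-(m : ℤ) - 1) * p = (j + (-(m : ℤ)) * p) - p := by ring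
      rw [e, h', ih]
      push_cast
      ring

theorem stmt4 (x : ℤ → ℝ) (h0 : x 0 = 0) (k n : ℤ) (hco : IsCoprime k n)
    (hn : 1 ≤ n) (hdiff : ∀ i : ℤ, x (i + k) - x i = x i - x (i - k))
    (hper : ∀ i : ℤ, x (i + n) = 1 + x i) :
    ∀ i : ℤ, x i = (i : ℝ) / (n : ℝ) := by
  obtain ⟨a, b, hab⟩ := hco
  set d : ℤ → ℝ := fun j => x (j + k) - x j with hd
  have hdk : ∀ j, d (j + k) = d j + 0 := by
    intro j
    have := hdiff (j + k)
    simp only [hd, add_sub_cancel_right] at *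
    linarith
  have hdn : ∀ j, d (j + n) = d j + 0 := by
    intro j
    have h1 := hper (j + k)
    have h2 := hper j
    simp only [hd]
    rw [show j + n + k = j + k + n by ring, h1, h2]
    ring
  -- d is constant
  have hdc : ∀ j, d j = d 0 := by
    intro j
    have e1 := step_aux d k 0 hdk a 0
    have e2 := step_aux d n 0 hdn b (0 + a * k)
    have e3 := step_aux d k 0 hdk (a * j) 0
    have e4 := step_aux d n 0 hdn (b * j) (0 + a * j * k)
    have : (0 : ℤ) + a * j * k + b * j * n = j := by
      have : (a * k + b * n) * j = 1 * j := by rw [hab]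
      linarith [this]
    rw [this] at e4
    simp at e1 e2 e3 e4
    rw [e4, e3]
  set c : ℝ := d 0 with hc
  have hxk : ∀ j, x (j + k) = x j + c := by
    intro j
    have := hdc j
    simp only [hd] at this
    linarith
  have hxn : ∀ j, x (j + n) = x j + 1 := by
    intro j; rw [hper j]; ring
  have hx1 : ∀ j, x (j + 1) = x j + ((a : ℝ) * c + b) := by
    intro j
    have e1 := step_aux x k c hxk a j
    have e2 := step_aux x n 1 hxn b (j + a * k)
    have e : j + a * k + b * n = j + 1 := by
      have : (a * k + b * n) = 1 := hab
      linarith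
    rw [e] at e2
    rw [e2, e1]; ring
  have key : ∀ i : ℤ, x i = (i : ℝ) * ((a : ℝ) * c + b) := by
    intro i
    have := step_aux x 1 ((a : ℝ) * c + b) hx1 i 0
    simpa [h0] using this
  have hne : (n : ℝ) ≠ 0 := by
    have : (1 : ℝ) ≤ (n : ℝ) := by exact_mod_cast hn
    linarith
  have hxn1 : x n = 1 := by
    have := hper 0
    simpa [h0] using this
  have hs : (a : ℝ) * c + b = 1 / n := by
    have := key n
    rw [hxn1] at this
    field_simp
    linarith [this]
  intro i
  rw [key i, hs]
  ring
end

section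
/- Let V : ℤ → ℝ² be a discrete periodic bicycle (n, dn-1)-path with d ≠ 0, writing V_i = (x_i, y_i). Then x_j = j/n for every j ∈ ℤ. -/
/-- Squared Euclidean distance between two points of the plane. -/
def distSq (p q : ℝ × ℝ) : ℝ := (p.1 - q.1) ^ 2 + (p.2 - q.2) ^ 2

/-- A discrete periodic bicycle `(n,k)`-path. -/
def IsBicyclePath (n k : ℤ) (V : ℤ → ℝ × ℝ) : Prop :=
  V 0 = (0, 0) ∧ (∀ i : ℤ, V (n + i) = V i + (1, 0)) ∧
    (∀ i j : ℤ, distSq (V i) (V (i + 1)) = distSq (V j) (V (j + 1))) ∧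
    (∀ i j : ℤ, distSq (V i) (V (i + k)) = distSq (V j) (V (j + k)))

theorem stmt6 (n : ℤ) (hn : 1 ≤ n) (d : ℤ) (hd : d ≠ 0) (V : ℤ → ℝ × ℝ)
    (hV : IsBicyclePath n (d * n - 1) V) :
    ∀ j : ℤ, (V j).1 = (j : ℝ) / (n : ℝ) := by
  obtain ⟨h0, hper, hedge, hdiag⟩ := hV
  have hnR : (n : ℝ) ≠ 0 := Int.cast_ne_zero.mpr (by omega)
  have hdR : (d : ℝ) ≠ 0 := Int.cast_ne_zero.mpr hd
  -- iterated periodicity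
  have hA : ∀ e : ℤ, ∀ m : ℤ, V (e * n + m) = V m + ((e : ℝ), 0) := by
    intro e
    induction e using Int.induction_on with
    | zero => intro m; simp
    | succ e ih =>
      intro m
      have h1 : ((e : ℤ) + 1) * n + m = n + (e * n + m) := by ring
      rw [h1, hper, ih]
      push_cast
      ext <;> simp <;> ring
    | pred e ih =>
      intro m
      have h1 : -(e : ℤ) * n + m = n + ((-(e : ℤ) - 1) * n + m) := by ring
      have h2 := hper ((-(e : ℤ) - 1) * n + m)
      rw [← h1, ih] at h2
      have h3 := eq_sub_of_add_eq h2.symm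
      rw [h3]
      push_cast
      ext <;> simp <;> ring
  -- the diagonal endpoints
  have hE : ∀ i : ℤ, V (i + (d * n - 1)) = V (i - 1) + ((d : ℝ), 0) := by
    intro i
    have h1 : i + (d * n - 1) = d * n + (i - 1) := by ring
    rw [h1, hA]
  -- constant x-increment
  have hc : ∀ i : ℤ, (V i).1 - (V (i - 1)).1 = (V 1).1 := by
    intro i
    have e1 := hdiag i 1
    rw [hE i, hE 1] at e1
    have h11 : (1 : ℤ) - 1 = 0 := by norm_num
    rw [h11, h0] at e1
    have e2 := hedge (i - 1) 0
    have h12 : i - 1 + 1 = i := by ring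
    rw [h12, h0] at e2
    simp only [distSq, Prod.fst_add, Prod.snd_add, zero_add] at e1 e2
    norm_num at e1 e2
    have key : (d : ℝ) * ((V i).1 - (V (i - 1)).1 - (V 1).1) = 0 := by
      linear_combination (e2 - e1) / 2
    rcases mul_eq_zero.mp key with h | h
    · exact absurd h hdR
    · linarith
  have hc' : ∀ i : ℤ, (V (i + 1)).1 = (V i).1 + (V 1).1 := by
    intro i
    have := hc (i + 1)
    have h1 : i + 1 - 1 = i := by ring
    rw [h1] at this
    linarith
  -- x_j = j * c
  have hx : ∀ j : ℤ, (V j).1 = (j : ℝ) * (V 1).1 := by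
    intro j
    induction j using Int.induction_on with
    | zero => simp [h0]
    | succ j ih => rw [hc' j, ih]; push_cast; ring
    | pred j ih =>
      have := hc' (-(j : ℤ) - 1)
      have h1 : -(j : ℤ) - 1 + 1 = -j := by ring
      rw [h1, ih] at this
      push_cast at this ⊢
      linarith
  -- n * c = 1
  have hxn : (V n).1 = 1 := by
    have := hper 0
    rw [add_zero, h0] at this
    rw [this]; simp
  have hcval : (V 1).1 = 1 / (n : ℝ) := by
    have := hx n
    rw [hxn] at this
    field_simp
    linarith [this]
  intro j
  rw [hx j, hcval]
  field_simp
end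

section
/- Let n be odd and d ≠ 0 an integer. Then every discrete periodic bicycle (n, dn-1)-path is the regular path, i.e., V_i = (i/n, 0) up to constant vertical translation: the y-coordinates satisfy y_i = y_j for all i, j. -/
theorem stmt7 (n : ℤ) (hn : 1 ≤ n) (hodd : Odd n) (d : ℤ) (hd : d ≠ 0)
    (V : ℤ → ℝ × ℝ) (hV : IsBicyclePath n (d * n - 1) V) :
    ∀ i : ℤ, V i = ((i : ℝ) / (n : ℝ), 0) := by
  obtain ⟨h0, hper, h1, hk⟩ := hV
  have hnR : (n : ℝ) ≠ 0 := by
    have : (0:ℤ) < n := by omega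
    exact_mod_cast this.ne'
  set A : ℤ → ℝ := fun i => (V (i+1)).1 - (V i).1 with hAdef
  set B : ℤ → ℝ := fun i => (V (i+1)).2 - (V i).2 with hBdef
  -- shift by multiples of n
  have hshift : ∀ m i : ℤ, V (m * n + i) = V i + ((m : ℝ), 0) := by
    intro m
    induction m using Int.induction_on with
    | zero => intro i; simp [Prod.ext_iff]
    | succ m ih =>
        intro i
        have h2 : ((m:ℤ) + 1) * n + i = n + ((m:ℤ) * n + i) := by ring
        rw [h2, hper, ih]
        apply Prod.ext
        · simp only [Prod.fst_add]; push_cast; ring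
        · simp
    | pred m ih =>
        intro i
        have hp1 := hper ((-(m:ℤ) - 1) * n + i)
        rw [show n + ((-(m:ℤ) - 1) * n + i) = -(m:ℤ) * n + i from by ring, ih] at hp1
        apply Prod.ext
        · have h3 := congrArg Prod.fst hp1
          simp only [Prod.fst_add] at h3 ⊢
          push_cast at h3 ⊢
          linarith
        · have h3 := congrArg Prod.snd hp1
          simp only [Prod.snd_add] at h3 ⊢
          norm_num at h3 ⊢
          linarith
  -- edge condition in coordinates
  have hE : ∀ i j : ℤ, A i ^ 2 + B i ^ 2 = A j ^ 2 + B j ^ 2 := by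
    intro i j
    have := h1 i j
    simp only [distSq, hAdef, hBdef] at *
    nlinarith [this]
  -- chord condition
  have hK : ∀ i j : ℤ, (A i - d) ^ 2 + B i ^ 2 = (A j - d) ^ 2 + B j ^ 2 := by
    intro i j
    have hcoord : ∀ i : ℤ, (i + 1) + (d * n - 1) = d * n + i := by intro i; ring
    have := hk (i+1) (j+1)
    rw [hcoord i, hcoord j, hshift d i, hshift d j] at this
    simp only [distSq, hAdef, hBdef, Prod.fst_add, Prod.snd_add] at *
    nlinarith [this]
  have hdR : (d : ℝ) ≠ 0 := by exact_mod_cast hd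
  have hA : ∀ i j : ℤ, A i = A j := by
    intro i j
    have h2 : (d : ℝ) * (A i - A j) = 0 := by nlinarith [hE i j, hK i j]
    rcases mul_eq_zero.mp h2 with h | h
    · exact absurd h hdR
    · linarith
  have hB2 : ∀ i j : ℤ, B i ^ 2 = B j ^ 2 := by
    intro i j
    have h2 := hE i j
    rw [hA i j] at h2
    linarith
  -- telescoping sums over one period
  set N := n.toNat with hNdef
  have hNn : (N : ℤ) = n := Int.toNat_of_nonneg (by omega)
  have hVn : V n = V 0 + (1, 0) := by have := hper 0; simpa using this
  have hsumA : ∑ i ∈ Finset.range N, A (i : ℤ) = 1 := by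
    have htel : ∑ i ∈ Finset.range N, ((fun m : ℕ => (V (m : ℤ)).1) (i+1)
        - (fun m : ℕ => (V (m : ℤ)).1) i) = (V (N : ℤ)).1 - (V (0:ℤ)).1 :=
      Finset.sum_range_sub (fun m : ℕ => (V (m : ℤ)).1) N
    have heq : ∀ i ∈ Finset.range N, A (i : ℤ) = ((fun m : ℕ => (V (m : ℤ)).1) (i+1)
        - (fun m : ℕ => (V (m : ℤ)).1) i) := by
      intro i _; simp [hAdef]
    rw [Finset.sum_congr rfl heq, htel, hNn, hVn, h0]
    simp
  have hsumB : ∑ i ∈ Finset.range N, B (i : ℤ) = 0 := by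
    have htel : ∑ i ∈ Finset.range N, ((fun m : ℕ => (V (m : ℤ)).2) (i+1)
        - (fun m : ℕ => (V (m : ℤ)).2) i) = (V (N : ℤ)).2 - (V (0:ℤ)).2 :=
      Finset.sum_range_sub (fun m : ℕ => (V (m : ℤ)).2) N
    have heq : ∀ i ∈ Finset.range N, B (i : ℤ) = ((fun m : ℕ => (V (m : ℤ)).2) (i+1)
        - (fun m : ℕ => (V (m : ℤ)).2) i) := by
      intro i _; simp [hBdef]
    rw [Finset.sum_congr rfl heq, htel, hNn, hVn, h0]
    simp
  -- A 0 = 1/n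
  have hA0 : A 0 = 1 / n := by
    have hc : ∀ i ∈ Finset.range N, A (i : ℤ) = A 0 := fun i _ => hA _ 0
    rw [Finset.sum_congr rfl hc, Finset.sum_const, Finset.card_range, nsmul_eq_mul] at hsumA
    have hNR : (N : ℝ) = (n : ℝ) := by exact_mod_cast hNn
    rw [hNR] at hsumA
    field_simp
    linarith
  -- B 0 = 0 via parity
  have hB0 : B 0 = 0 := by
    by_contra hb
    set ε : ℕ → ℤ := fun i => if B (i : ℤ) = B 0 then 1 else -1 with hεdef
    have hεB : ∀ i : ℕ, B (i : ℤ) = (ε i : ℝ) * B 0 := by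
      intro i
      by_cases h : B (i : ℤ) = B 0
      · simp [hεdef, h]
      · have hsq := hB2 (i : ℤ) 0
        have hmul : (B (i:ℤ) - B 0) * (B (i:ℤ) + B 0) = 0 := by nlinarith
        rcases mul_eq_zero.mp hmul with h' | h'
        · exact absurd (by linarith) h
        · simp [hεdef, h]; linarith
    have hsum0 : ((∑ i ∈ Finset.range N, ε i : ℤ) : ℝ) * B 0 = 0 := by
      push_cast
      rw [Finset.sum_mul]
      have hc : ∀ i ∈ Finset.range N, (ε i : ℝ) * B 0 = B (i : ℤ) :=
        fun i _ => (hεB i).symm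
      rw [Finset.sum_congr rfl hc, hsumB]
    have hZ : (∑ i ∈ Finset.range N, ε i : ℤ) = 0 := by
      rcases mul_eq_zero.mp hsum0 with h | h
      · exact_mod_cast h
      · exact absurd h hb
    -- pass to ZMod 2
    have hmod : ((0 : ℤ) : ZMod 2) = (N : ZMod 2) := by
      rw [← hZ]
      push_cast
      have hc : ∀ i ∈ Finset.range N, ((ε i : ℤ) : ZMod 2) = 1 := by
        intro i _
        by_cases h : B (i : ℤ) = B 0 <;> simp [hεdef, h] <;> decide
      rw [Finset.sum_congr rfl hc, Finset.sum_const, Finset.card_range]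
      simp
    have hNodd : Odd N := by
      rcases hodd with ⟨m, hm⟩
      exact ⟨(n / 2).toNat, by omega⟩
    rcases hNodd with ⟨m, hm⟩
    rw [hm] at hmod
    push_cast at hmod
    rw [show ((2 : ZMod 2)) = 0 from by decide, zero_mul, zero_add] at hmod
    exact absurd hmod (by decide)
  have hBall : ∀ i : ℤ, B i = 0 := by
    intro i
    have := hB2 i 0
    rw [hB0] at this
    nlinarith
  have hAall : ∀ i : ℤ, A i = 1 / n := fun i => (hA i 0).trans hA0
  -- conclude by induction
  intro i
  induction i using Int.induction_on with
  | zero => rw [h0]; norm_num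
  | succ i ih =>
      have ha := hAall i
      have hb := hBall i
      simp only [hAdef, hBdef] at ha hb
      rw [ih] at ha hb
      have hv : V (i + 1) = ((i : ℝ)/n + 1/n, 0) := by
        apply Prod.ext <;> simp only [] at ha hb ⊢ <;> simp at ha hb ⊢ <;> linarith
      rw [hv]
      push_cast
      rw [← add_div]
  | pred i ih =>
      have ha := hAall (-i - 1)
      have hb := hBall (-i - 1)
      have hcoord : (-i - 1) + 1 = -(i : ℤ) := by ring
      simp only [hAdef, hBdef, hcoord] at ha hb
      rw [ih] at ha hb
      have hv : V (-i - 1) = ((-i : ℝ)/n - 1/n, 0) := by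
        apply Prod.ext <;> simp only [] at ha hb ⊢ <;> simp at ha hb ⊢ <;> linarith
      rw [hv]
      push_cast
      rw [div_sub_div_same]
end

section
/- Let d ≠ 0 and n ≥ 1 with V : ℤ → ℝ², V_i = (x_i, y_i), satisfying the periodicity condition V_{n+i} = V_i + e₁ and V_0 = (0,0). Then V is a discrete (n, dn-1)-path if and only if x_j = j/n for all j and there exist r ≥ 0 and signs χ_j ∈ {-1,1} (j ∈ ℤ/nℤ) with ∑_{j=0}^{n-1} χ_j r = 0 such that y_{j+1} = y_j + χ_j r for all j. -/
lemma lemA (n : ℕ) (V : ℤ → ℝ × ℝ) (hper : ∀ i : ℤ, V ((n : ℤ) + i) = V i + (1, 0)) :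
    ∀ m : ℤ, ∀ i : ℤ, V (m * n + i) = V i + ((m : ℝ), 0) := by
  intro m
  induction m using Int.induction_on with
  | zero => intro i; simp
  | succ m ih =>
      intro i
      have h1 : ((m : ℤ) + 1) * n + i = (n : ℤ) + (m * n + i) := by ring
      rw [h1, hper, ih]
      simp [Prod.ext_iff]; ring
  | pred m ih =>
      intro i
      have h1 : (n : ℤ) + ((-(m : ℤ) - 1) * n + i) = -(m : ℤ) * n + i := by ring
      have h2 := hper ((-(m : ℤ) - 1) * n + i)
      rw [h1, ih] at h2
      have h3 := eq_sub_of_add_eq h2.symm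
      rw [h3]
      simp [Prod.ext_iff]; ring

lemma choose_chi (n : ℕ) [NeZero n] (b : ℤ → ℝ) (B : ℝ)
    (habs : ∀ i, |b i| = |B|) (hp : ∀ j : ℤ, b (j % (n : ℤ)) = b j)
    (hsum : ∑ i ∈ Finset.range n, b (i : ℤ) = 0) :
    ∃ χ : ZMod n → ℝ, (∀ j, χ j = -1 ∨ χ j = 1) ∧ (∑ j : ZMod n, χ j * |B| = 0) ∧
      ∀ j : ℤ, b j = χ (j : ZMod n) * |B| := by
  have key : ∀ v : ℤ, (if b v < 0 then (-1 : ℝ) else 1) * |B| = b v := by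
    intro v
    by_cases h : b v < 0
    · have := habs v; rw [abs_of_neg h] at this; simp [h]; linarith
    · have := habs v; rw [abs_of_nonneg (not_lt.mp h)] at this; simp [h, this]
  refine ⟨fun j => if b (j.val : ℤ) < 0 then -1 else 1, ?_, ?_, ?_⟩
  · intro j
    rcases lt_or_ge (b ((j.val : ℕ) : ℤ)) 0 with h | h
    · exact Or.inl (if_pos h)
    · exact Or.inr (if_neg (not_lt.mpr h))
  · have h1 : ∑ j : ZMod n, (if b ((j.val : ℕ) : ℤ) < 0 then (-1:ℝ) else 1) * |B|
        = ∑ i ∈ Finset.range n, b (i : ℤ) := by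
      rw [Finset.sum_congr rfl (fun j _ => key ((j.val : ℕ) : ℤ))]
      refine Finset.sum_nbij' (fun j : ZMod n => j.val) (fun i : ℕ => (i : ZMod n))
        ?_ ?_ ?_ ?_ ?_
      · intro a _; exact Finset.mem_range.mpr (ZMod.val_lt a)
      · intro a _; exact Finset.mem_univ _
      · intro a _; exact ZMod.natCast_rightInverse a
      · intro a ha; exact ZMod.val_cast_of_lt (Finset.mem_range.mp ha)
      · intro a _; rfl
    rw [h1, hsum]
  · intro j
    have hv : ((((j : ZMod n)).val : ℕ) : ℤ) = j % n := ZMod.val_intCast j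
    rw [← hp j, ← hv, key]

theorem stmt8 (n : ℕ) [NeZero n] (d : ℤ) (hd : d ≠ 0) (V : ℤ → ℝ × ℝ)
    (hper : ∀ i : ℤ, V ((n : ℤ) + i) = V i + (1, 0)) (h0 : V 0 = (0, 0)) :
    IsBicyclePath n (d * n - 1) V ↔
      (∀ j : ℤ, (V j).1 = (j : ℝ) / (n : ℝ)) ∧
        ∃ r : ℝ, 0 ≤ r ∧ ∃ χ : ZMod n → ℝ, (∀ j, χ j = -1 ∨ χ j = 1) ∧
          (∑ j : ZMod n, χ j * r = 0) ∧
          ∀ j : ℤ, (V (j + 1)).2 = (V j).2 + χ (j : ZMod n) * r := by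
  have hA := lemA n V hper
  have hnR : (n : ℝ) ≠ 0 := Nat.cast_ne_zero.mpr (NeZero.ne n)
  have hdR : (d : ℝ) ≠ 0 := Int.cast_ne_zero.mpr hd
  have hkey : ∀ i : ℤ, V (i + (d * (n : ℤ) - 1)) = V (i - 1) + ((d : ℝ), 0) := by
    intro i
    have h1 : i + (d * (n : ℤ) - 1) = d * n + (i - 1) := by ring
    rw [h1, hA]
  have hVn : V (n : ℤ) = (1, 0) := by
    have h9 := hper 0
    rw [add_zero, h0] at h9
    rw [h9]
    norm_num [Prod.ext_iff]
  constructor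
  · rintro ⟨-, -, hedge, hchord⟩
    have hE : ∀ i : ℤ, ((V (i+1)).1 - (V i).1)^2 + ((V (i+1)).2 - (V i).2)^2
        = ((V 1).1 - (V 0).1)^2 + ((V 1).2 - (V 0).2)^2 := by
      intro i
      have h := hedge i 0
      norm_num [distSq] at h
      linear_combination h
    have hC : ∀ i : ℤ, (((V (i+1)).1 - (V i).1) - d)^2 + ((V (i+1)).2 - (V i).2)^2
        = (((V 1).1 - (V 0).1) - d)^2 + ((V 1).2 - (V 0).2)^2 := by
      intro i
      have h := hchord (i+1) 1
      rw [hkey (i+1), hkey 1] at h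
      have e1 : i + 1 - 1 = i := by ring
      have e2 : (1 : ℤ) - 1 = 0 := by ring
      rw [e1, e2] at h
      simp only [distSq, Prod.fst_add, Prod.snd_add] at h
      linear_combination h
    have ha : ∀ i : ℤ, (V (i+1)).1 - (V i).1 = (V 1).1 - (V 0).1 := by
      intro i
      have h5 : (2*(d:ℝ)) * (((V (i+1)).1 - (V i).1) - ((V 1).1 - (V 0).1)) = 0 := by
        linear_combination (hE i) - (hC i)
      rcases mul_eq_zero.mp h5 with h6 | h6
      · exact absurd h6 (mul_ne_zero two_ne_zero hdR)
      · exact sub_eq_zero.mp h6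
    have hx : ∀ j : ℤ, (V j).1 = j * ((V 1).1 - (V 0).1) := by
      intro j
      induction j using Int.induction_on with
      | zero => simp [h0]
      | succ m ih =>
          have h7 := ha m
          push_cast
          push_cast at ih
          linear_combination h7 + ih
      | pred m ih =>
          have h7 := ha (-(m:ℤ) - 1)
          have e : (-(m:ℤ) - 1) + 1 = -(m:ℤ) := by ring
          rw [e] at h7
          push_cast
          push_cast at ih
          linear_combination ih - h7
    have hA1 : (V 1).1 - (V 0).1 = 1 / n := by
      have h8 := hx (n : ℤ)
      rw [hVn] at h8
      norm_num at h8
      field_simp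
      linear_combination -h8
    have hxj : ∀ j : ℤ, (V j).1 = j / n := by
      intro j; rw [hx j, hA1]; ring
    refine ⟨hxj, ?_⟩
    have hb2 : ∀ i : ℤ, ((V (i+1)).2 - (V i).2)^2 = ((V 1).2 - (V 0).2)^2 := by
      intro i
      linear_combination (hE i) - (((V (i+1)).1 - (V i).1) + ((V 1).1 - (V 0).1)) * (ha i)
    have habs : ∀ i : ℤ, |(V (i+1)).2 - (V i).2| = |(V 1).2 - (V 0).2| :=
      fun i => (sq_eq_sq_iff_abs_eq_abs _ _).mp (hb2 i)
    have hbp : ∀ j : ℤ, (V (j % (n:ℤ) + 1)).2 - (V (j % (n:ℤ))).2 = (V (j+1)).2 - (V j).2 := by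
      intro j
      have e1 := hA (j / (n:ℤ)) (j % (n:ℤ))
      have e2 := hA (j / (n:ℤ)) (j % (n:ℤ) + 1)
      have eidx : j / (n:ℤ) * (n:ℤ) + j % (n:ℤ) = j := by
        rw [mul_comm]; exact Int.mul_ediv_add_emod j (n:ℤ)
      have eidx2 : j / (n:ℤ) * (n:ℤ) + (j % (n:ℤ) + 1) = j + 1 := by
        rw [← add_assoc, eidx]
      rw [eidx] at e1
      rw [eidx2] at e2
      rw [e1, e2]
      simp [Prod.snd_add]
    have hsum : ∑ i ∈ Finset.range n, ((V ((i:ℤ)+1)).2 - (V (i:ℤ)).2) = 0 := by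
      have h10 := Finset.sum_range_sub (fun m : ℕ => (V (m:ℤ)).2) n
      simp only [Nat.cast_zero, h0, hVn] at h10
      push_cast at h10
      simpa using h10
    obtain ⟨χ, hχ1, hχ2, hχ3⟩ :=
      choose_chi n (fun j : ℤ => (V (j+1)).2 - (V j).2) ((V 1).2 - (V 0).2) habs hbp hsum
    exact ⟨|(V 1).2 - (V 0).2|, abs_nonneg _, χ, hχ1, hχ2, fun j => by linarith [hχ3 j]⟩
  · rintro ⟨hx, r, hr, χ, hχpm, -, hy⟩
    have hχsq : ∀ m : ℤ, (χ ((m : ZMod n)))^2 = 1 := by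
      intro m; rcases hχpm ((m : ZMod n)) with h | h <;> rw [h] <;> ring
    have hval : ∀ i : ℤ, distSq (V i) (V (i+1)) = (1/(n:ℝ))^2 + r^2 := by
      intro i
      simp only [distSq]
      rw [hx i, hx (i+1), hy i]
      push_cast
      linear_combination r^2 * hχsq i
    have hval2 : ∀ i : ℤ, distSq (V i) (V (i + (d * (n:ℤ) - 1))) = (1/(n:ℝ) - d)^2 + r^2 := by
      intro i
      rw [hkey i]
      simp only [distSq, Prod.fst_add, Prod.snd_add]
      rw [hx i, hx (i-1)]
      have hy' := hy (i - 1)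
      have e : i - 1 + 1 = i := by ring
      rw [e] at hy'
      rw [hy']
      have h2 := hχsq (i - 1)
      push_cast at h2 ⊢
      linear_combination r^2 * h2
    refine ⟨h0, hper, fun i j => by rw [hval i, hval j], fun i j => by rw [hval2 i, hval2 j]⟩
end

section
/- Let V : ℤ → ℝ² be a discrete periodic bicycle (n, dn+1)-path with d ≠ 0, writing V_i = (x_i, y_i). Then x_j = j/n for every j, and the y-coordinates satisfy (y_{i+1} - y_i)^2 = (y_{j+1} - y_j)^2 for all i, j. -/
theorem stmt9 (n : ℤ) (hn : 1 ≤ n) (d : ℤ) (hd : d ≠ 0) (V : ℤ → ℝ × ℝ)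
    (hV : IsBicyclePath n (d * n + 1) V) :
    (∀ j : ℤ, (V j).1 = (j : ℝ) / (n : ℝ)) ∧
      ∀ i j : ℤ, ((V (i + 1)).2 - (V i).2) ^ 2 = ((V (j + 1)).2 - (V j).2) ^ 2 := by
  obtain ⟨h0, hper, hE, hK⟩ := hV
  have hmul : ∀ m : ℤ, ∀ i : ℤ, V (m * n + i) = V i + ((m : ℝ), 0) := by
    intro m
    induction m using Int.induction_on with
    | zero => intro i; simp
    | succ m ih =>
      intro i
      have harg : ((m : ℤ) + 1) * n + i = n + (m * n + i) := by ring
      rw [harg, hper, ih]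
      ext <;> simp <;> push_cast <;> ring
    | pred m ih =>
      intro i
      have harg : n + ((-(m : ℤ) - 1) * n + i) = -m * n + i := by ring
      have h1 := hper ((-(m : ℤ) - 1) * n + i)
      rw [harg, ih] at h1
      have h2 := eq_sub_of_add_eq h1.symm
      rw [h2]; ext <;> simp <;> push_cast <;> ring
  have hk' : ∀ i : ℤ, V (i + (d * n + 1)) = V (i + 1) + ((d : ℝ), 0) := by
    intro i
    have harg : i + (d * n + 1) = d * n + (i + 1) := by ring
    rw [harg, hmul]
  have hd' : (d : ℝ) ≠ 0 := Int.cast_ne_zero.mpr hd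
  -- x-increments are constant
  have ha : ∀ i : ℤ, (V (i + 1)).1 - (V i).1 = (V 1).1 - (V 0).1 := by
    intro i
    have e1 := hE i 0
    have e2 := hK i 0
    rw [hk' i, hk' 0] at e2
    simp only [distSq, Prod.fst_add, Prod.snd_add, zero_add] at e1 e2
    have hmain : (d : ℝ) * ((V (i + 1)).1 - (V i).1) = (d : ℝ) * ((V 1).1 - (V 0).1) := by
      linear_combination (e2 - e1) / 2
    exact mul_left_cancel₀ hd' hmain
  have hb : ∀ i : ℤ, ((V (i + 1)).2 - (V i).2) ^ 2 = ((V 1).2 - (V 0).2) ^ 2 := by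
    intro i
    have e1 := hE i 0
    simp only [distSq, zero_add] at e1
    have hu := ha i
    linear_combination e1 + ((V i).1 - (V (i + 1)).1 + ((V 0).1 - (V 1).1)) * hu
  have hx0 : (V 0).1 = 0 := by rw [h0]
  have hxlin : ∀ j : ℤ, (V j).1 = (j : ℝ) * (V 1).1 := by
    intro j
    induction j using Int.induction_on with
    | zero => simpa using hx0
    | succ m ih =>
      have := ha m
      push_cast
      rw [hx0] at this
      push_cast at ih ⊢
      linarith
    | pred m ih =>
      have := ha (-(m : ℤ) - 1)
      have harg : (-(m : ℤ) - 1) + 1 = -m := by ring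
      rw [harg, hx0] at this
      push_cast at ih this ⊢
      linarith
  have hxn : (V n).1 = 1 := by
    have := hper 0
    rw [add_zero, h0] at this
    rw [this]; simp
  have hn0 : (n : ℝ) ≠ 0 := by
    have : (0 : ℤ) < n := by omega
    exact_mod_cast this.ne'
  have hx1 : (V 1).1 = 1 / (n : ℝ) := by
    have := hxlin n
    rw [hxn] at this
    field_simp
    linarith
  constructor
  · intro j
    rw [hxlin j, hx1]; ring
  · intro i j
    rw [hb i, hb j]
end

section
/- For any nonzero integer d and n ≥ 1, a map V : ℤ → ℝ² is a discrete periodic bicycle (n, dn+1)-path if and only if it is a discrete periodic bicycle (n, dn-1)-path. -/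
private lemma shift_lemma (n : ℤ) (V : ℤ → ℝ × ℝ)
    (h : ∀ i : ℤ, V (n + i) = V i + (1, 0)) (d : ℤ) :
    ∀ i : ℤ, V (i + d * n) = V i + ((d : ℝ), 0) := by
  induction d using Int.induction_on with
  | zero => intro i; simp
  | succ k ih =>
      intro i
      have : i + (k + 1) * n = n + (i + k * n) := by ring
      rw [this, h, ih]
      ext <;> simp <;> ring
  | pred k ih =>
      intro i
      have h2 := h (i + (-(k : ℤ) - 1) * n)
      have : n + (i + (-(k : ℤ) - 1) * n) = i + (-(k : ℤ)) * n := by ring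
      rw [this, ih] at h2
      push_cast at h2 ⊢
      have h3 : V (i + (-(k : ℤ) - 1) * n) = V i + ((-(k : ℝ)), 0) - (1, 0) := by
        rw [eq_sub_iff_add_eq, h2]
      rw [h3]
      ext <;> simp <;> push_cast <;> ring

private lemma key_identity (n : ℤ) (V : ℤ → ℝ × ℝ)
    (h : ∀ i : ℤ, V (n + i) = V i + (1, 0)) (d : ℤ) (i : ℤ) :
    distSq (V i) (V (i + (d * n + 1))) + distSq (V (i + 1)) (V ((i + 1) + (d * n - 1)))
      = 2 * distSq (V i) (V (i + 1)) + 2 * (d : ℝ) ^ 2 := by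
  have e1 : V (i + (d * n + 1)) = V (i + 1) + ((d : ℝ), 0) := by
    have : i + (d * n + 1) = (i + 1) + d * n := by ring
    rw [this, shift_lemma n V h d]
  have e2 : V ((i + 1) + (d * n - 1)) = V i + ((d : ℝ), 0) := by
    have : (i + 1) + (d * n - 1) = i + d * n := by ring
    rw [this, shift_lemma n V h d]
  rw [e1, e2]
  simp only [distSq, Prod.fst_add, Prod.snd_add]
  ring

theorem stmt10 (n : ℤ) (hn : 1 ≤ n) (d : ℤ) (hd : d ≠ 0) (V : ℤ → ℝ × ℝ) :
    IsBicyclePath n (d * n + 1) V ↔ IsBicyclePath n (d * n - 1) V := by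
  constructor
  · rintro ⟨h0, h1, h2, h3⟩
    refine ⟨h0, h1, h2, ?_⟩
    intro i j
    have ki := key_identity n V h1 d (i - 1)
    have kj := key_identity n V h1 d (j - 1)
    simp only [sub_add_cancel] at ki kj
    have hij : distSq (V (i - 1)) (V (i - 1 + (d * n + 1)))
        = distSq (V (j - 1)) (V (j - 1 + (d * n + 1))) := h3 _ _
    have hE : distSq (V (i - 1)) (V (i - 1 + 1)) = distSq (V (j - 1)) (V (j - 1 + 1)) := h2 _ _
    simp only [sub_add_cancel] at hE
    linarith
  · rintro ⟨h0, h1, h2, h3⟩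
    refine ⟨h0, h1, h2, ?_⟩
    intro i j
    have ki := key_identity n V h1 d i
    have kj := key_identity n V h1 d j
    have hij : distSq (V (i + 1)) (V (i + 1 + (d * n - 1)))
        = distSq (V (j + 1)) (V (j + 1 + (d * n - 1))) := h3 _ _
    have hE : distSq (V i) (V (i + 1)) = distSq (V j) (V (j + 1)) := h2 _ _
    linarith
end

section
/- Let n be odd and d ≠ 0. If V is a discrete periodic bicycle (n, dn+1)-path, then V_i = (i/n, 0) for all i ∈ ℤ. -/
theorem stmt11 (n : ℤ) (hn : 1 ≤ n) (hodd : Odd n) (d : ℤ) (hd : d ≠ 0)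
    (V : ℤ → ℝ × ℝ) (hV : IsBicyclePath n (d * n + 1) V) :
    ∀ i : ℤ, V i = ((i : ℝ) / (n : ℝ), 0) := by
  obtain ⟨h0, hper, h1, hk⟩ := hV
  have hn0 : (n : ℝ) ≠ 0 := Int.cast_ne_zero.mpr (by omega)
  have hd0 : (d : ℝ) ≠ 0 := Int.cast_ne_zero.mpr hd
  -- translation lemma
  have htrans : ∀ m i : ℤ, V (m * n + i) = V i + ((m : ℝ), 0) := by
    intro m
    induction m using Int.induction_on with
    | zero => intro i; simp
    | succ m ih =>
      intro i
      have e : ((m : ℤ) + 1) * n + i = n + (m * n + i) := by ring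
      rw [e, hper, ih]
      refine Prod.ext ?_ ?_ <;> push_cast <;> simp <;> ring
    | pred m ih =>
      intro i
      have e : n + ((-(m : ℤ) - 1) * n + i) = (-m) * n + i := by ring
      have h2 := hper ((-(m : ℤ) - 1) * n + i)
      rw [e, ih] at h2
      refine Prod.ext ?_ ?_
      · have := congrArg Prod.fst h2
        simp at this ⊢
        push_cast at this ⊢
        linarith
      · have := congrArg Prod.snd h2
        simp at this ⊢
        push_cast at this ⊢
        linarith
  set c := distSq (V 0) (V 1) with hc
  set C := distSq (V 0) (V (d * n + 1)) with hC
  have hchord : ∀ i : ℤ, distSq (V i) (V (i + 1)) = c := by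
    intro i
    have := h1 i 0
    simpa using this
  have hbig : ∀ i : ℤ, distSq (V i) (V (i + 1) + ((d : ℝ), 0)) = C := by
    intro i
    have h := hk i 0
    have e : i + (d * n + 1) = d * n + (i + 1) := by ring
    rw [e, htrans d (i + 1)] at h
    simpa using h
  set a : ℝ := (C - c - (d : ℝ) ^ 2) / (2 * (d : ℝ)) with ha
  have hx : ∀ i : ℤ, (V (i + 1)).1 - (V i).1 = a := by
    intro i
    have h1i := hchord i
    have h2i := hbig i
    simp only [distSq, Prod.fst_add, Prod.snd_add, add_zero] at h1i h2i
    rw [ha]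
    field_simp
    nlinarith [h1i, h2i]
  have hy2 : ∀ i : ℤ, ((V (i + 1)).2 - (V i).2) ^ 2 = c - a ^ 2 := by
    intro i
    have h1i := hchord i
    have hxi := hx i
    simp only [distSq] at h1i
    linear_combination h1i - hxi * (a + (V (i + 1)).1 - (V i).1)
  set N := n.toNat with hNdef
  have hNn : (N : ℤ) = n := Int.toNat_of_nonneg (by omega)
  have hNR : (N : ℝ) = (n : ℝ) := by exact_mod_cast congrArg (Int.cast : ℤ → ℝ) hNn
  have hVn : V n = (1, 0) := by
    have := htrans 1 0
    simp [h0] at this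
    simpa using this
  -- telescoping sums
  have hsum1 : ∑ i ∈ Finset.range N, ((V ((i : ℤ) + 1)).1 - (V (i : ℤ)).1) = 1 := by
    have h := Finset.sum_range_sub (fun m : ℕ => (V (m : ℤ)).1) N
    have e : ∀ i : ℕ, (V (((i + 1 : ℕ) : ℤ))).1 - (V (i : ℤ)).1
        = (V ((i : ℤ) + 1)).1 - (V (i : ℤ)).1 := by
      intro i; push_cast; ring_nf
    rw [Finset.sum_congr rfl (fun i _ => e i)] at h
    rw [h, show ((N : ℕ) : ℤ) = n from hNn]
    norm_num [hVn, h0]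
  have hsum2 : ∑ i ∈ Finset.range N, ((V ((i : ℤ) + 1)).2 - (V (i : ℤ)).2) = 0 := by
    have h := Finset.sum_range_sub (fun m : ℕ => (V (m : ℤ)).2) N
    have e : ∀ i : ℕ, (V (((i + 1 : ℕ) : ℤ))).2 - (V (i : ℤ)).2
        = (V ((i : ℤ) + 1)).2 - (V (i : ℤ)).2 := by
      intro i; push_cast; ring_nf
    rw [Finset.sum_congr rfl (fun i _ => e i)] at h
    rw [h, show ((N : ℕ) : ℤ) = n from hNn]
    norm_num [hVn, h0]
  have hNa : (N : ℝ) * a = 1 := by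
    have hs : ∑ i ∈ Finset.range N, ((V ((i : ℤ) + 1)).1 - (V (i : ℤ)).1)
        = ∑ _i ∈ Finset.range N, a := Finset.sum_congr rfl (fun i _ => hx (i : ℤ))
    rw [hs, Finset.sum_const, nsmul_eq_mul, Finset.card_range] at hsum1
    exact hsum1
  have haval : a = 1 / (n : ℝ) := by
    rw [← hNR, eq_div_iff (by rw [hNR]; exact hn0)]
    linear_combination hNa
  -- parity argument : all vertical steps vanish
  set b : ℝ := (V (0 + 1)).2 - (V 0).2 with hb
  have hyb : ∀ i : ℤ, (V (i + 1)).2 - (V i).2 = b ∨ (V (i + 1)).2 - (V i).2 = -b := by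
    intro i
    have h := hy2 i
    have h0' := hy2 0
    have hsq : ((V (i + 1)).2 - (V i).2) ^ 2 = b ^ 2 := by rw [h, hb, ← h0']
    have : (((V (i + 1)).2 - (V i).2) - b) * (((V (i + 1)).2 - (V i).2) + b) = 0 := by
      nlinarith [hsq]
    rcases mul_eq_zero.mp this with h' | h'
    · left; linarith
    · right; linarith
  have hbzero : b = 0 := by
    by_contra hbne
    set p : ℕ → Prop := fun i => (V ((i : ℤ) + 1)).2 - (V (i : ℤ)).2 = b with hp
    have hsplit := Finset.sum_filter_add_sum_filter_not (Finset.range N) p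
      (fun i => (V ((i : ℤ) + 1)).2 - (V (i : ℤ)).2)
    set k₁ := ((Finset.range N).filter p).card with hk1
    set k₂ := ((Finset.range N).filter (fun i => ¬ p i)).card with hk2
    have hcard : k₁ + k₂ = N := by
      rw [hk1, hk2]
      rw [Finset.card_filter_add_card_filter_not]
      exact Finset.card_range N
    have hs1 : ∑ i ∈ (Finset.range N).filter p,
        ((V ((i : ℤ) + 1)).2 - (V (i : ℤ)).2) = (k₁ : ℝ) * b := by
      rw [Finset.sum_congr rfl (fun i hi => (Finset.mem_filter.mp hi).2)]
      simp [mul_comm]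
      exact Or.inl rfl
    have hs2 : ∑ i ∈ (Finset.range N).filter (fun i => ¬ p i),
        ((V ((i : ℤ) + 1)).2 - (V (i : ℤ)).2) = (k₂ : ℝ) * (-b) := by
      have : ∀ i ∈ (Finset.range N).filter (fun i => ¬ p i),
          (V ((i : ℤ) + 1)).2 - (V (i : ℤ)).2 = -b := by
        intro i hi
        have hni := (Finset.mem_filter.mp hi).2
        rcases hyb (i : ℤ) with h' | h'
        · exact absurd h' hni
        · exact h'
      rw [Finset.sum_congr rfl this]
      simp [mul_comm]
      exact Or.inl rfl
    rw [hs1, hs2, hsum2] at hsplit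
    have hkk : (k₁ : ℝ) = (k₂ : ℝ) := by
      have : ((k₁ : ℝ) - (k₂ : ℝ)) * b = 0 := by linear_combination hsplit
      rcases mul_eq_zero.mp this with h' | h'
      · linarith
      · exact absurd h' hbne
    have hkkn : k₁ = k₂ := Nat.cast_injective hkk
    have hNodd : Odd N := by
      have : Odd ((N : ℤ)) := hNn ▸ hodd
      exact Int.odd_coe_nat N |>.mp this
    have : N = 2 * k₁ := by omega
    rw [this] at hNodd
    exact (Nat.not_odd_iff_even.mpr ⟨k₁, by ring⟩) hNodd
  have hy0 : ∀ i : ℤ, (V (i + 1)).2 = (V i).2 := by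
    intro i
    rcases hyb i with h' | h' <;> rw [hbzero] at h' <;> linarith
  -- conclude by induction
  intro i
  induction i using Int.induction_on with
  | zero => simp [h0]
  | succ i ih =>
    have hxi := hx i
    have hyi := hy0 i
    refine Prod.ext ?_ ?_
    · have : (V ((i : ℤ) + 1)).1 = (V (i : ℤ)).1 + a := by linarith
      rw [this, ih, haval]
      push_cast
      field_simp
    · rw [hyi, ih]
  | pred i ih =>
    have e : (-(i : ℤ) - 1) + 1 = -i := by ring
    have hxi := hx (-(i : ℤ) - 1)
    have hyi := hy0 (-(i : ℤ) - 1)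
    rw [e] at hxi hyi
    refine Prod.ext ?_ ?_
    · have : (V (-(i : ℤ) - 1)).1 = (V (-(i : ℤ))).1 - a := by linarith
      rw [this, ih, haval]
      push_cast
      field_simp
    · rw [← hyi, ih]
end

section
/- Let P, Q : ℤ → ℝ² be n-periodic paths in the sense that P_{i+n} = P_i + e₁ and Q_{i+n} = Q_i + e₁, lying strictly above the horizontal line y = -c. Suppose for each i the quadrilateral P_i Q_i P_{i+1} Q_{i+1} is an isosceles trapezoid: |P_i Q_i| = |P_{i+1} Q_{i+1}| and the segment P_i Q_{i+1} is parallel to Q_i P_{i+1}. Then the signed area under one period of P above y = -c equals the signed area under one period of Q above y = -c. -/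
/-- Twice the signed area contribution of the segment `AB` in the shoelace formula,
divided by two. -/
noncomputable def cross2 (A B : ℝ × ℝ) : ℝ := (A.1 * B.2 - B.1 * A.2) / 2

/-- The signed area of the closed polygon `V̌₀ V₀ V₁ ⋯ Vₙ V̌ₙ`, where
`V̌ᵢ = (x(Vᵢ), -c)`, computed via the shoelace formula. -/
noncomputable def pathArea (n : ℕ) (c : ℝ) (V : ℤ → ℝ × ℝ) : ℝ :=
  cross2 ((V 0).1, -c) (V 0) + (∑ i ∈ Finset.range n, cross2 (V i) (V (i + 1))) +
    cross2 (V n) ((V n).1, -c) + cross2 ((V n).1, -c) ((V 0).1, -c)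

/-- The signed area of the trapezoid strip under one edge, above `y = -c`. -/
noncomputable def trap (c : ℝ) (A B : ℝ × ℝ) : ℝ :=
  (A.1 - B.1) * (A.2 + B.2 + 2 * c) / 2

lemma pathArea_eq_sum_trap (n : ℕ) (c : ℝ) (V : ℤ → ℝ × ℝ) :
    pathArea n c V = ∑ i ∈ Finset.range n, trap c (V i) (V (i + 1)) := by
  induction n with
  | zero => simp [pathArea, cross2]; ring
  | succ n ih =>
    simp only [pathArea, Finset.sum_range_succ, cross2, trap] at ih ⊢
    push_cast at ih ⊢
    linear_combination ih

theorem stmt13 (n : ℕ) (hn : 0 < n) (c : ℝ) (P Q : ℤ → ℝ × ℝ)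
    (hP : ∀ i : ℤ, P (i + n) = P i + (1, 0))
    (hQ : ∀ i : ℤ, Q (i + n) = Q i + (1, 0))
    (hPc : ∀ i : ℤ, -c < (P i).2) (hQc : ∀ i : ℤ, -c < (Q i).2)
    (hlen : ∀ i : ℤ, ((P i).1 - (Q i).1) ^ 2 + ((P i).2 - (Q i).2) ^ 2 =
      ((P (i + 1)).1 - (Q (i + 1)).1) ^ 2 + ((P (i + 1)).2 - (Q (i + 1)).2) ^ 2)
    (hpar : ∀ i : ℤ,
      ((Q (i + 1)).1 - (P i).1) * ((P (i + 1)).2 - (Q i).2) -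
        ((P (i + 1)).1 - (Q i).1) * ((Q (i + 1)).2 - (P i).2) = 0) :
    pathArea n c P = pathArea n c Q := by
  set φ : ℤ → ℝ := fun i => ((Q i).1 - (P i).1) * ((P i).2 + (Q i).2 + 2 * c) / 2 with hφ
  have hstep : ∀ i : ℤ, trap c (P i) (P (i + 1)) - trap c (Q i) (Q (i + 1)) =
      φ (i + 1) - φ i := by
    intro i
    have h := hpar i
    simp only [trap, hφ]
    linear_combination (-(1 : ℝ) / 2) * h
  have hPn : P (n : ℤ) = P 0 + (1, 0) := by simpa using hP 0
  have hQn : Q (n : ℤ) = Q 0 + (1, 0) := by simpa using hQ 0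
  have hφn : φ (n : ℤ) = φ 0 := by
    simp only [hφ, hPn, hQn, Prod.fst_add, Prod.snd_add]
    ring
  have tele : ∑ i ∈ Finset.range n,
      (trap c (P i) (P (i + 1)) - trap c (Q i) (Q (i + 1))) = φ (n : ℤ) - φ 0 := by
    have : ∀ i ∈ Finset.range n,
        trap c (P i) (P (i + 1)) - trap c (Q i) (Q (i + 1)) =
          (fun k : ℕ => φ (k : ℤ)) (i + 1) - (fun k : ℕ => φ (k : ℤ)) i := by
      intro i _
      simpa [add_comm] using hstep (i : ℤ)
    rw [Finset.sum_congr rfl this, Finset.sum_range_sub (fun k : ℕ => φ (k : ℤ))]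
    simp
  rw [pathArea_eq_sum_trap, pathArea_eq_sum_trap]
  have := tele
  rw [hφn, sub_self] at this
  rw [← sub_eq_zero, ← Finset.sum_sub_distrib]
  exact this
end
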